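/- Let k be any field, R = k[x_1,...,x_r], and I a monomial ideal with R/I artinian. If multiplication by ℓ = x_1 + x_2 + ... + x_r has maximal rank [R/I]_i → [R/I]_{i+1} for all i, then R/I has the Weak Lefschetz Property (i.e., a general linear form also has maximal rank in every degree); conversely, if ×ℓ fails maximal rank in some degree then R/I fails the WLP, provided k is infinite. -/

import Mathlib

/-! The torus `(kˣ)^r` acts on `k[x_1, …, x_r]` by `x_j ↦ c_j x_j`. The action preserves supports,
hence the monomial ideal `I` and the grading, and it moves `x_1 + ⋯ + x_r` to `∑ c_j x_j`; so if
`×∑ c_j x_j` has maximal rank in degree `i` for some `c` in the torus, so has `×(x_1 + ⋯ + x_r)`.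
In a fixed degree, `×∑ c_j x_j` composed with a one-sided inverse of `×ℓ` (for `ℓ` of maximal
rank) is an endomorphism whose determinant is a polynomial in `c` not vanishing at the coefficients
of `ℓ`: maximal rank is a nonempty Zariski-open condition. As `R/I` is artinian only finitely many
degrees matter, and over an infinite field finitely many nonempty open sets meet the torus. -/

open MvPolynomial

/-- The dimension of the degree-`i` component of the graded algebra `R/I`, where
`R = k[x_1,...,x_r]` is standard graded: it is the image of the space of homogeneous
polynomials of degree `i` in the quotient. -/
noncomputable def hilb {k : Type*} [Field k] {σ : Type*} (I : Ideal (MvPolynomial σ k))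
    (i : ℕ) : ℕ :=
  Module.finrank k ((homogeneousSubmodule σ k i).map (Ideal.Quotient.mkₐ k I).toLinearMap)

/-- Injectivity of the multiplication map `×f : [R/I]_i → [R/I]_{i + deg f}`. -/
def mulInj {k : Type*} [Field k] {σ : Type*} (I : Ideal (MvPolynomial σ k))
    (f : MvPolynomial σ k) (i : ℕ) : Prop :=
  ∀ g ∈ homogeneousSubmodule σ k i, f * g ∈ I → g ∈ I

/-- Surjectivity of the multiplication map `×f : [R/I]_i → [R/I]_j` (with `j = i + deg f`). -/
def mulSurj {k : Type*} [Field k] {σ : Type*} (I : Ideal (MvPolynomial σ k))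
    (f : MvPolynomial σ k) (i j : ℕ) : Prop :=
  ∀ g ∈ homogeneousSubmodule σ k j, ∃ h ∈ homogeneousSubmodule σ k i, g - f * h ∈ I

open Function

section MaximalRank

variable {k V W ι : Type*} [Field k] [AddCommGroup V] [Module k V] [FiniteDimensional k V]
  [AddCommGroup W] [Module k W] [FiniteDimensional k W] [Fintype ι] [DecidableEq ι]

theorem LinearMap.exists_mvPolynomial_eval_ne_zero_iff_isUnit
    (φ : (ι → k) →ₗ[k] Module.End k V) :
    ∃ f : MvPolynomial ι k, ∀ c, eval c f ≠ 0 ↔ IsUnit (φ c) := by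
  refine ⟨(φ.polyCharpoly (Pi.basisFun k ι)).coeff 0, fun c => ?_⟩
  have hc : ⇑((Pi.basisFun k ι).repr c) = c := funext fun i => Pi.basisFun_repr k ι c i
  rw [isUnit_iff_isUnit_det, det_eq_sign_charpoly_coeff, isUnit_iff_ne_zero,
    ← φ.polyCharpoly_coeff_eval (Pi.basisFun k ι) c 0, hc]
  simp

theorem LinearMap.exists_mvPolynomial_injective_or_surjective
    (φ : (ι → k) →ₗ[k] V →ₗ[k] W) {c₀ : ι → k}
    (h : Injective (φ c₀) ∨ Surjective (φ c₀)) :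
    ∃ f : MvPolynomial ι k, eval c₀ f ≠ 0 ∧
      ∀ c, eval c f ≠ 0 → Injective (φ c) ∨ Surjective (φ c) := by
  rcases h with hinj | hsurj
  · obtain ⟨p, hp⟩ := (φ c₀).exists_leftInverse_of_injective (ker_eq_bot.mpr hinj)
    obtain ⟨f, hf⟩ := exists_mvPolynomial_eval_ne_zero_iff_isUnit (llcomp k V W V p ∘ₗ φ)
    refine ⟨f, (hf c₀).mpr ?_, fun c hc => Or.inl ?_⟩
    · rw [comp_apply, llcomp_apply', hp]
      exact isUnit_one
    · exact Injective.of_comp (f := p) ((Module.End.isUnit_iff _).mp ((hf c).mp hc)).injective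
  · obtain ⟨q, hq⟩ := (φ c₀).exists_rightInverse_of_surjective (range_eq_top.mpr hsurj)
    obtain ⟨f, hf⟩ := exists_mvPolynomial_eval_ne_zero_iff_isUnit (lcomp k W q ∘ₗ φ)
    refine ⟨f, (hf c₀).mpr ?_, fun c hc => Or.inr ?_⟩
    · rw [comp_apply, lcomp_apply', hq]
      exact isUnit_one
    · exact Surjective.of_comp (g := q) ((Module.End.isUnit_iff _).mp ((hf c).mp hc)).surjective

end MaximalRank

namespace MvPolynomial

variable {k σ : Type*} [Field k]

theorem exists_eval_ne_zero [Infinite k] {p : MvPolynomial σ k} (hp : p ≠ 0) :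
    ∃ c, eval c p ≠ 0 := by
  by_contra! h
  exact hp (funext fun c => by simp [h c])

theorem exists_units_forall_eval_ne_zero [Infinite k] [Fintype σ] {ι : Type*} (s : Finset ι)
    {f : ι → MvPolynomial σ k} (hf : ∀ i ∈ s, f i ≠ 0) :
    ∃ c : σ → kˣ, ∀ i ∈ s, eval (fun j => (c j : k)) (f i) ≠ 0 := by
  -- the factor `∏ j, X j` keeps the point inside the torus
  obtain ⟨c, hc⟩ := exists_eval_ne_zero (p := (∏ j, X j) * ∏ i ∈ s, f i)
    (mul_ne_zero (Finset.prod_ne_zero_iff.mpr fun j _ => X_ne_zero j)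
      (Finset.prod_ne_zero_iff.mpr hf))
  simp only [map_mul, map_prod, eval_X, mul_ne_zero_iff, Finset.prod_ne_zero_iff,
    Finset.mem_univ, forall_const] at hc
  exact ⟨fun j => Units.mk0 (c j) (hc.1 j), hc.2⟩

noncomputable def torusAct (c : σ → kˣ) : MvPolynomial σ k ≃ₐ[k] MvPolynomial σ k :=
  AlgEquiv.ofAlgHom (aeval fun j => c j • X j) (aeval fun j => (c j)⁻¹ • X j)
    (algHom_ext fun j => by simp [Units.smul_def])
    (algHom_ext fun j => by simp [Units.smul_def])

theorem torusAct_X (c : σ → kˣ) (j : σ) : torusAct c (X j) = (c j : k) • X j := by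
  simp [torusAct, Units.smul_def]

theorem torusAct_sum_X [Fintype σ] (c : σ → kˣ) :
    torusAct c (∑ j, X j) = ∑ j, (c j : k) • X j := by
  simp only [map_sum, torusAct_X]

theorem torusAct_monomial (c : σ → kˣ) (s : σ →₀ ℕ) (a : k) :
    torusAct c (monomial s a) = monomial s ((s.prod fun j e => (c j : k) ^ e) * a) := by
  rw [torusAct, AlgEquiv.ofAlgHom_apply, aeval_monomial, monomial_eq, algebraMap_eq]
  simp only [Units.smul_def, smul_eq_C_mul, mul_pow]
  rw [Finsupp.prod_mul, map_mul, map_finsuppProd]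
  simp only [map_pow]
  ring

theorem coeff_torusAct (c : σ → kˣ) (p : MvPolynomial σ k) (m : σ →₀ ℕ) :
    coeff m (torusAct c p) = (m.prod fun j e => (c j : k) ^ e) * coeff m p := by
  classical
  induction p using MvPolynomial.induction_on' with
  | monomial s a =>
    rw [torusAct_monomial, coeff_monomial, coeff_monomial]
    split_ifs with h
    · rw [h]
    · rw [mul_zero]
  | add p q hp hq => rw [map_add, coeff_add, coeff_add, hp, hq, mul_add]

theorem support_torusAct (c : σ → kˣ) (p : MvPolynomial σ k) :
    (torusAct c p).support = p.support := by
  ext m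
  simp [coeff_torusAct, Finsupp.prod, Finset.prod_ne_zero_iff]

theorem torusAct_mem_homogeneousSubmodule_iff (c : σ → kˣ) (p : MvPolynomial σ k) (n : ℕ) :
    torusAct c p ∈ homogeneousSubmodule σ k n ↔ p ∈ homogeneousSubmodule σ k n := by
  simp only [mem_homogeneousSubmodule, IsHomogeneous, IsWeightedHomogeneous, ← mem_support_iff,
    support_torusAct]

theorem torusAct_mem_span_monomial_iff (c : σ → kˣ) (S : Set (σ →₀ ℕ)) (p : MvPolynomial σ k) :
    torusAct c p ∈ Ideal.span ((fun s => monomial s (1 : k)) '' S) ↔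
      p ∈ Ideal.span ((fun s => monomial s (1 : k)) '' S) := by
  simp only [mem_ideal_span_monomial_image, support_torusAct]

section TorusStable

variable {I : Ideal (MvPolynomial σ k)} {c : σ → kˣ} {f : MvPolynomial σ k} {i : ℕ}

theorem mulInj_of_torusAct (hI : ∀ p, torusAct c p ∈ I ↔ p ∈ I)
    (h : mulInj I (torusAct c f) i) : mulInj I f i := by
  intro g hg hfg
  rw [← hI, map_mul] at hfg
  exact (hI g).mp (h _ ((torusAct_mem_homogeneousSubmodule_iff c g i).mpr hg) hfg)

theorem mulSurj_of_torusAct (hI : ∀ p, torusAct c p ∈ I ↔ p ∈ I) {j : ℕ}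
    (h : mulSurj I (torusAct c f) i j) : mulSurj I f i j := by
  intro g hg
  obtain ⟨h', hh', hsub⟩ := h _ ((torusAct_mem_homogeneousSubmodule_iff c g j).mpr hg)
  refine ⟨(torusAct c).symm h', ?_, ?_⟩
  · rwa [← torusAct_mem_homogeneousSubmodule_iff c, AlgEquiv.apply_symm_apply]
  · rwa [← hI, map_sub, map_mul, AlgEquiv.apply_symm_apply]

end TorusStable

noncomputable def quotHomogeneous (I : Ideal (MvPolynomial σ k)) (i : ℕ) :
    Submodule k (MvPolynomial σ k ⧸ I) :=
  (homogeneousSubmodule σ k i).map (Ideal.Quotient.mkₐ k I).toLinearMap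

theorem mk_mul_mem_quotHomogeneous {I : Ideal (MvPolynomial σ k)} {ℓ : MvPolynomial σ k}
    (hℓ : ℓ ∈ homogeneousSubmodule σ k 1) {i : ℕ} {g : MvPolynomial σ k ⧸ I}
    (hg : g ∈ quotHomogeneous I i) :
    Ideal.Quotient.mkₐ k I ℓ * g ∈ quotHomogeneous I (i + 1) := by
  obtain ⟨p, hp, rfl⟩ := hg
  refine ⟨ℓ * p, ?_, rfl⟩
  rw [add_comm]
  exact IsHomogeneous.mul hℓ hp

noncomputable def quotHomogeneousMul (I : Ideal (MvPolynomial σ k)) (i : ℕ) :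
    homogeneousSubmodule σ k 1 →ₗ[k] quotHomogeneous I i →ₗ[k] quotHomogeneous I (i + 1) :=
  LinearMap.mk₂ k (fun ℓ g => ⟨Ideal.Quotient.mkₐ k I ℓ * g, mk_mul_mem_quotHomogeneous ℓ.2 g.2⟩)
    (fun _ _ _ => by ext; simp [add_mul]) (fun _ _ _ => by ext; simp [smul_mul_assoc])
    (fun _ _ _ => by ext; simp [mul_add]) (fun _ _ _ => by ext; simp [mul_smul_comm])

theorem quotHomogeneousMul_apply_coe (I : Ideal (MvPolynomial σ k)) (i : ℕ)
    (ℓ : homogeneousSubmodule σ k 1) (g : quotHomogeneous I i) :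
    (quotHomogeneousMul I i ℓ g : MvPolynomial σ k ⧸ I) = Ideal.Quotient.mkₐ k I ℓ * g :=
  rfl

theorem injective_quotHomogeneousMul_iff (I : Ideal (MvPolynomial σ k)) (i : ℕ)
    (ℓ : homogeneousSubmodule σ k 1) :
    Injective (quotHomogeneousMul I i ℓ) ↔ mulInj I ℓ i := by
  rw [injective_iff_map_eq_zero]
  constructor
  · intro h g hg hℓg
    have hmk := congrArg Subtype.val (h ⟨_, g, hg, rfl⟩ (Subtype.ext ?_))
    · simpa [Ideal.Quotient.eq_zero_iff_mem] using hmk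
    · simpa [quotHomogeneousMul_apply_coe, ← map_mul, Ideal.Quotient.eq_zero_iff_mem] using hℓg
  · rintro h ⟨_, p, hp, rfl⟩ hℓp
    have hmk := congrArg Subtype.val hℓp
    simp only [quotHomogeneousMul_apply_coe, AlgHom.toLinearMap_apply, ← map_mul,
      Submodule.coe_zero, Ideal.Quotient.mkₐ_eq_mk, Ideal.Quotient.eq_zero_iff_mem] at hmk
    exact Subtype.ext (by simpa [Ideal.Quotient.eq_zero_iff_mem] using h p hp hmk)

theorem surjective_quotHomogeneousMul_iff (I : Ideal (MvPolynomial σ k)) (i : ℕ)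
    (ℓ : homogeneousSubmodule σ k 1) :
    Surjective (quotHomogeneousMul I i ℓ) ↔ mulSurj I ℓ i (i + 1) := by
  constructor
  · intro h g hg
    obtain ⟨⟨_, p, hp, rfl⟩, hℓp⟩ := h ⟨_, g, hg, rfl⟩
    refine ⟨p, hp, ?_⟩
    have hmk := congrArg Subtype.val hℓp
    simp only [quotHomogeneousMul_apply_coe, AlgHom.toLinearMap_apply, ← map_mul,
      Ideal.Quotient.mkₐ_eq_mk, Ideal.Quotient.eq] at hmk
    simpa using neg_mem hmk
  · rintro h ⟨_, g, hg, rfl⟩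
    obtain ⟨p, hp, hsub⟩ := h g hg
    refine ⟨⟨_, p, hp, rfl⟩, Subtype.ext ?_⟩
    simp only [quotHomogeneousMul_apply_coe, AlgHom.toLinearMap_apply, ← map_mul,
      Ideal.Quotient.mkₐ_eq_mk, Ideal.Quotient.eq]
    simpa using neg_mem hsub

theorem coe_linearCombination_X [Fintype σ] (c : σ → k) :
    ((Fintype.linearCombination k (fun j => ⟨X j, isHomogeneous_X k j⟩) c :
      homogeneousSubmodule σ k 1) : MvPolynomial σ k) = ∑ j, c j • X j := by
  simp [Fintype.linearCombination_apply]

theorem exists_units_forall_lt_mulInj_or_mulSurj [Infinite k] [Fintype σ]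
    {I : Ideal (MvPolynomial σ k)} [Module.Finite k (MvPolynomial σ k ⧸ I)] {c₀ : σ → k}
    (h : ∀ i, mulInj I (∑ j, c₀ j • X j) i ∨ mulSurj I (∑ j, c₀ j • X j) i (i + 1)) (D : ℕ) :
    ∃ c : σ → kˣ, ∀ i < D,
      mulInj I (∑ j, (c j : k) • X j) i ∨ mulSurj I (∑ j, (c j : k) • X j) i (i + 1) := by
  classical
  let φ i := quotHomogeneousMul I i ∘ₗ
    Fintype.linearCombination k (fun j => ⟨X j, isHomogeneous_X k j⟩)
  have hφ : ∀ i c, (Injective (φ i c) ∨ Surjective (φ i c)) ↔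
      mulInj I (∑ j, c j • X j) i ∨ mulSurj I (∑ j, c j • X j) i (i + 1) := fun i c => by
    rw [LinearMap.comp_apply, injective_quotHomogeneousMul_iff, surjective_quotHomogeneousMul_iff,
      coe_linearCombination_X]
  choose f hf₀ hf using fun i => (φ i).exists_mvPolynomial_injective_or_surjective
    ((hφ i c₀).mpr (h i))
  obtain ⟨c, hc⟩ := exists_units_forall_eval_ne_zero (Finset.range D) (f := f)
    fun i _ hfi => hf₀ i (by rw [hfi, map_zero])
  exact ⟨c, fun i hi => (hφ i _).mp (hf i _ (hc i (Finset.mem_range.mpr hi)))⟩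

theorem coeff_single_aeval_X (p : Polynomial k) (j : σ) (n : ℕ) :
    coeff (Finsupp.single j n) (Polynomial.aeval (X j) p) = p.coeff n := by
  classical
  induction p using Polynomial.induction_on' with
  | add p q hp hq => rw [map_add, coeff_add, hp, hq, Polynomial.coeff_add]
  | monomial m a =>
    rw [Polynomial.aeval_monomial, algebraMap_eq, C_mul_X_pow_eq_monomial, coeff_monomial,
      Polynomial.coeff_monomial]
    simp only [(Finsupp.single_injective j).eq_iff]

variable (k) in
theorem exists_le_single_of_finite_quotient {S : Set (σ →₀ ℕ)}
    [Module.Finite k (MvPolynomial σ k ⧸ Ideal.span ((fun s => monomial s (1 : k)) '' S))]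
    (j : σ) : ∃ n, ∃ s ∈ S, s ≤ Finsupp.single j n := by
  obtain ⟨p, hmonic, hp⟩ := Algebra.IsIntegral.isIntegral (R := k)
    (Ideal.Quotient.mk (Ideal.span ((fun s => monomial s (1 : k)) '' S)) (X j))
  have hmem : Polynomial.aeval (X j) p ∈ Ideal.span ((fun s => monomial s (1 : k)) '' S) := by
    rw [← Ideal.Quotient.eq_zero_iff_mem, ← Ideal.Quotient.mkₐ_eq_mk k,
      ← Polynomial.aeval_algHom_apply]
    exact hp
  refine ⟨p.natDegree, mem_ideal_span_monomial_image.mp hmem _ ?_⟩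
  rw [mem_support_iff, coeff_single_aeval_X, hmonic.coeff_natDegree]
  exact one_ne_zero

theorem exists_forall_ge_homogeneousSubmodule_le [Fintype σ] {S : Set (σ →₀ ℕ)}
    [Module.Finite k (MvPolynomial σ k ⧸ Ideal.span ((fun s => monomial s (1 : k)) '' S))] :
    ∃ D, ∀ i ≥ D, ∀ p ∈ homogeneousSubmodule σ k i,
      p ∈ Ideal.span ((fun s => monomial s (1 : k)) '' S) := by
  choose N s hs hsN using exists_le_single_of_finite_quotient k (S := S)
  refine ⟨∑ j, N j + 1, fun i hi p hp => mem_ideal_span_monomial_image.mpr fun m hm => ?_⟩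
  obtain ⟨j, hj⟩ : ∃ j, N j ≤ m j := by
    by_contra! hlt
    have hdeg : i = m.degree := hp.degree_eq_sum_deg_support hm
    rw [Finsupp.degree_eq_sum] at hdeg
    have := Finset.sum_le_sum fun j (_ : j ∈ Finset.univ) => (hlt j).le
    omega
  exact ⟨s j, hs j, (hsN j).trans (Finsupp.single_le_iff.mpr hj)⟩

end MvPolynomial

/-- for a monomial artinian algebra over an infinite field, the WLP (for a
general linear form) holds iff the specific linear form `ℓ = x_1 + ... + x_r` has maximal
rank in every degree. -/
theorem stmt19 (k : Type*) [Field k] [Infinite k] (r : ℕ) (S : Set (Fin r →₀ ℕ))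
    (I : Ideal (MvPolynomial (Fin r) k))
    (hI : I = Ideal.span ((fun s => (monomial s (1 : k))) '' S))
    (hart : Module.Finite k (MvPolynomial (Fin r) k ⧸ I)) :
    (∃ ℓ ∈ homogeneousSubmodule (Fin r) k 1, ∀ i : ℕ,
      mulInj I ℓ i ∨ mulSurj I ℓ i (i + 1)) ↔
    (∀ i : ℕ, mulInj I (∑ j, (X j : MvPolynomial (Fin r) k)) i ∨
      mulSurj I (∑ j, (X j : MvPolynomial (Fin r) k)) i (i + 1)) := by
  subst hI
  refine ⟨fun ⟨ℓ, hℓ, hmax⟩ => ?_,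
    fun h => ⟨_, Submodule.sum_mem _ fun j _ => isHomogeneous_X k j, h⟩⟩
  rw [homogeneousSubmodule_one_eq_span_X, Submodule.mem_span_range_iff_exists_fun] at hℓ
  obtain ⟨c₀, rfl⟩ := hℓ
  obtain ⟨D, hD⟩ := exists_forall_ge_homogeneousSubmodule_le (k := k) (S := S)
  obtain ⟨c, hc⟩ := exists_units_forall_lt_mulInj_or_mulSurj hmax D
  intro i
  rcases lt_or_ge i D with hi | hi
  · rw [← torusAct_sum_X] at hc
    exact (hc i hi).imp (mulInj_of_torusAct (torusAct_mem_span_monomial_iff c S))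
      (mulSurj_of_torusAct (torusAct_mem_span_monomial_iff c S))
  · exact Or.inl fun g hg _ => hD i hi g hg
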